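/- arXiv:1910.10802 — 3 statements merged into one kernel-verified Lean document; each statement's English description precedes it below -/
import Mathlib

section
/- Let $\Phi:\mathbb{R}\to\mathbb{R}$ be a strictly increasing homeomorphism, $A:I\to(0,\infty)$ measurable with $c_1 \le \int_0^T 1/A(t)\,dt \le c_2$ for fixed constants $0<c_1\le c_2$, and $G\in C(I,\mathbb{R})$ with $\sup_I|G|\le K$. If $\xi\in\mathbb{R}$ satisfies $\int_0^T \frac{1}{A(t)}\Phi^{-1}(\xi+G(t))\,dt = d$ for a fixed $d\in\mathbb{R}$, then $|\xi| \le \sup_{|r|\le |d|/c_1}|\Phi(r)| + K$; in particular the bound depends only on $c_1$, $K$, $d$ and $\Phi$, not on $A$ or $G$. -/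
open MeasureTheory Set Filter Topology

/-- A priori bound for the constant `ξ` solving
`∫₀ᵀ (1/A(t)) Φ⁻¹(ξ + G(t)) dt = d`: `|ξ| ≤ sup_{|r| ≤ |d|/c₁} |Φ(r)| + K`,
a bound depending only on `c₁`, `K`, `d` and `Φ`. -/
theorem stmt2 (T : ℝ) (hT : 0 < T) (Φ : ℝ ≃ₜ ℝ) (hΦ : StrictMono ⇑Φ)
    (A : ℝ → ℝ) (hA : Measurable A) (hApos : ∀ t ∈ Icc (0:ℝ) T, 0 < A t)
    (hAint : IntegrableOn (fun t => (A t)⁻¹) (Icc 0 T))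
    (c₁ c₂ K d : ℝ) (hc₁ : 0 < c₁) (hc₁₂ : c₁ ≤ c₂)
    (hlow : c₁ ≤ ∫ t in Icc (0:ℝ) T, (A t)⁻¹)
    (hupp : (∫ t in Icc (0:ℝ) T, (A t)⁻¹) ≤ c₂)
    (G : ℝ → ℝ) (hG : ContinuousOn G (Icc 0 T)) (hK : ∀ t ∈ Icc (0:ℝ) T, |G t| ≤ K)
    (ξ : ℝ) (hξ : (∫ t in Icc (0:ℝ) T, (A t)⁻¹ * Φ.symm (ξ + G t)) = d) :
    |ξ| ≤ sSup ((fun r => |Φ r|) '' Icc (-(|d| / c₁)) (|d| / c₁)) + K := by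
  set S : ℝ := ∫ t in Icc (0:ℝ) T, (A t)⁻¹ with hS
  have hSpos : 0 < S := lt_of_lt_of_le hc₁ hlow
  set M : ℝ := |d| / c₁ with hM
  have hM0 : 0 ≤ M := div_nonneg (abs_nonneg d) hc₁.le
  set S₀ : ℝ := sSup ((fun r => |Φ r|) '' Icc (-M) M) with hS₀
  -- basic facts about the sup
  have hbdd : BddAbove ((fun r => |Φ r|) '' Icc (-M) M) :=
    (isCompact_Icc.image (by continuity)).bddAbove
  have hmem : ∀ r ∈ Icc (-M) M, |Φ r| ≤ S₀ := fun r hr =>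
    le_csSup hbdd ⟨r, hr, rfl⟩
  have h0mem : (0:ℝ) ∈ Icc (-M) M := ⟨neg_nonpos.2 hM0, hM0⟩
  -- monotonicity of Φ.symm
  have hΦsymm : StrictMono ⇑Φ.symm := by
    intro a b hab
    have := Φ.symm.surjective
    rcases Φ.surjective a with ⟨x, rfl⟩
    rcases Φ.surjective b with ⟨y, rfl⟩
    simpa using hΦ.lt_iff_lt.1 (by simpa using hab)
  have hΦsymmMono : Monotone ⇑Φ.symm := hΦsymm.monotone
  -- integrability
  have hcont : ContinuousOn (fun t => Φ.symm (ξ + G t)) (Icc 0 T) :=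
    Φ.symm.continuous.comp_continuousOn (continuousOn_const.add hG)
  obtain ⟨C, hC⟩ := isCompact_Icc.exists_bound_of_continuousOn hcont
  have hAnn : ∀ t ∈ Icc (0:ℝ) T, (0:ℝ) ≤ (A t)⁻¹ := fun t ht =>
    inv_nonneg.2 (hApos t ht).le
  have hf : IntegrableOn (fun t => (A t)⁻¹ * Φ.symm (ξ + G t)) (Icc 0 T) := by
    refine Integrable.mono' (hAint.mul_const C) ?_ ?_
    · exact (hA.inv.aestronglyMeasurable).mul
        (hcont.aestronglyMeasurable measurableSet_Icc)
    · filter_upwards [ae_restrict_mem measurableSet_Icc] with t ht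
      have := hC t ht
      have h1 : ‖(A t)⁻¹ * Φ.symm (ξ + G t)‖ = (A t)⁻¹ * ‖Φ.symm (ξ + G t)‖ := by
        rw [norm_mul, Real.norm_eq_abs (A t)⁻¹, abs_of_nonneg (hAnn t ht)]
      rw [h1]
      exact mul_le_mul_of_nonneg_left this (hAnn t ht)
  -- lower and upper integral comparison
  have hlowint : S * Φ.symm (ξ - K) ≤ d := by
    rw [← hξ]
    have : (∫ t in Icc (0:ℝ) T, (A t)⁻¹ * Φ.symm (ξ - K)) ≤
        ∫ t in Icc (0:ℝ) T, (A t)⁻¹ * Φ.symm (ξ + G t) := by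
      refine setIntegral_mono_on (hAint.mul_const _) hf measurableSet_Icc ?_
      intro t ht
      refine mul_le_mul_of_nonneg_left ?_ (hAnn t ht)
      apply hΦsymmMono
      have := (abs_le.1 (hK t ht)).1
      linarith
    calc S * Φ.symm (ξ - K)
        = ∫ t in Icc (0:ℝ) T, (A t)⁻¹ * Φ.symm (ξ - K) := by
          rw [hS, ← integral_mul_const]
      _ ≤ _ := this
  have huppint : d ≤ S * Φ.symm (ξ + K) := by
    rw [← hξ]
    have : (∫ t in Icc (0:ℝ) T, (A t)⁻¹ * Φ.symm (ξ + G t)) ≤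
        ∫ t in Icc (0:ℝ) T, (A t)⁻¹ * Φ.symm (ξ + K) := by
      refine setIntegral_mono_on hf (hAint.mul_const _) measurableSet_Icc ?_
      intro t ht
      refine mul_le_mul_of_nonneg_left ?_ (hAnn t ht)
      apply hΦsymmMono
      have := (abs_le.1 (hK t ht)).2
      linarith
    calc (∫ t in Icc (0:ℝ) T, (A t)⁻¹ * Φ.symm (ξ + G t))
        ≤ ∫ t in Icc (0:ℝ) T, (A t)⁻¹ * Φ.symm (ξ + K) := this
      _ = S * Φ.symm (ξ + K) := by rw [hS, ← integral_mul_const]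
  rw [abs_le]
  constructor
  · -- lower bound: -(S₀ + K) ≤ ξ
    rcases le_or_gt (Φ.symm (ξ + K)) 0 with h | h
    · -- d ≤ 0, and Φ.symm (ξ+K) ≥ d/S ≥ -M
      have hd0 : d ≤ 0 := le_trans huppint
        (mul_nonpos_of_nonneg_of_nonpos hSpos.le h)
      set r : ℝ := Φ.symm (ξ + K) with hr
      have hrge : -M ≤ r := by
        have h1 : d / S ≤ r := (div_le_iff₀' hSpos).2 huppint
        have h2 : -M ≤ d / S := by
          rw [hM, abs_of_nonpos hd0]
          rw [neg_div, neg_neg, div_le_div_iff₀ hc₁ hSpos]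
          nlinarith
        linarith
      have hrmem : r ∈ Icc (-M) M := ⟨hrge, le_trans h hM0⟩
      have : -S₀ ≤ Φ r := neg_le_of_abs_le (hmem r hrmem)
      have hΦr : Φ r = ξ + K := by simp [hr]
      linarith
    · have h1 : Φ 0 < Φ (Φ.symm (ξ + K)) := hΦ h
      have h2 : Φ (Φ.symm (ξ + K)) = ξ + K := by simp
      have h3 : -S₀ ≤ Φ 0 := neg_le_of_abs_le (hmem 0 h0mem)
      linarith
  · -- upper bound: ξ ≤ S₀ + K
    rcases le_or_gt 0 (Φ.symm (ξ - K)) with h | h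
    · have hd0 : 0 ≤ d := le_trans (mul_nonneg hSpos.le h) hlowint
      set r : ℝ := Φ.symm (ξ - K) with hr
      have hrle : r ≤ M := by
        have h1 : r ≤ d / S := (le_div_iff₀' hSpos).2 hlowint
        have h2 : d / S ≤ M := by
          rw [hM, abs_of_nonneg hd0, div_le_div_iff₀ hSpos hc₁]
          nlinarith
        linarith
      have hrmem : r ∈ Icc (-M) M := ⟨le_trans (neg_nonpos.2 hM0) h, hrle⟩
      have : Φ r ≤ S₀ := le_of_abs_le (hmem r hrmem)
      have hΦr : Φ r = ξ - K := by simp [hr]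
      linarith
    · have h1 : Φ (Φ.symm (ξ - K)) < Φ 0 := hΦ h
      have h2 : Φ (Φ.symm (ξ - K)) = ξ - K := by simp
      have h3 : Φ 0 ≤ S₀ := le_of_abs_le (hmem 0 h0mem)
      linarith
end

section
/- Let $\alpha,\beta\in W^{1,p}(I)$ be respectively a lower and an upper solution of the equation $(\Phi(a(t,x)x'))'=f(t,x,x')$ with $\alpha\le\beta$ on $I$, and suppose $a(0,x)\neq 0$ for all $x\in\mathbb{R}$. If $\alpha(0)=\beta(0)$, then $\mathcal{A}_\alpha(0)\le\mathcal{A}_\beta(0)$, where $\mathcal{A}_\alpha,\mathcal{A}_\beta$ are the continuous representatives of $t\mapsto a(t,\alpha(t))\alpha'(t)$ and $t\mapsto a(t,\beta(t))\beta'(t)$ respectively. -/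
open MeasureTheory Set Filter Topology

noncomputable section

/-- `x ∈ W^{1,p}([0,T])` with (weak) derivative `x'`. -/
def MemW1p (T p : ℝ) (x x' : ℝ → ℝ) : Prop :=
  MemLp x (ENNReal.ofReal p) (volume.restrict (Icc (0:ℝ) T)) ∧
  MemLp x' (ENNReal.ofReal p) (volume.restrict (Icc (0:ℝ) T)) ∧
  ∀ t ∈ Icc (0:ℝ) T, x t = x 0 + ∫ s in (0:ℝ)..t, x' s

/-- The `W^{1,p}` norm of a function `x` with derivative `x'`. -/
def W1pNorm (T p : ℝ) (x x' : ℝ → ℝ) : ℝ :=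
  (eLpNorm x (ENNReal.ofReal p) (volume.restrict (Icc (0:ℝ) T))).toReal +
  (eLpNorm x' (ENNReal.ofReal p) (volume.restrict (Icc (0:ℝ) T))).toReal

/-- `x` (with derivative `x'`) is a solution of `(Φ(a(t,x)x'))' = f(t,x,x')` a.e. on `[0,T]`,
with `x ∈ W^{1,p}` and `t ↦ Φ(a(t,x(t))x'(t))` in `W^{1,1}`. -/
def IsSolODE (T p : ℝ) (Φ : ℝ → ℝ) (a : ℝ → ℝ → ℝ) (f : ℝ → ℝ → ℝ → ℝ)
    (x x' : ℝ → ℝ) : Prop :=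
  MemW1p T p x x' ∧
  IntegrableOn (fun s => f s (x s) (x' s)) (Icc 0 T) ∧
  ∃ c : ℝ, ∀ᵐ t ∂(volume.restrict (Icc (0:ℝ) T)),
    Φ (a t (x t) * x' t) = c + ∫ s in (0:ℝ)..t, f s (x s) (x' s)

/-- `α` (with derivative `α'`) is a lower solution of `(Φ(a(t,x)x'))' = f(t,x,x')`:
`α ∈ W^{1,1}`, `t ↦ Φ(a(t,α)α')` is in `W^{1,1}` and its derivative is `≥ f(t,α,α')` a.e. -/
def IsLowerSol (T : ℝ) (Φ : ℝ → ℝ) (a : ℝ → ℝ → ℝ) (f : ℝ → ℝ → ℝ → ℝ)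
    (α α' : ℝ → ℝ) : Prop :=
  IntegrableOn α' (Icc 0 T) ∧
  (∀ t ∈ Icc (0:ℝ) T, α t = α 0 + ∫ s in (0:ℝ)..t, α' s) ∧
  ∃ z : ℝ → ℝ, IntegrableOn z (Icc 0 T) ∧
    (∃ c : ℝ, ∀ᵐ t ∂(volume.restrict (Icc (0:ℝ) T)),
      Φ (a t (α t) * α' t) = c + ∫ s in (0:ℝ)..t, z s) ∧
    (∀ᵐ t ∂(volume.restrict (Icc (0:ℝ) T)), f t (α t) (α' t) ≤ z t)

/-- `β` (with derivative `β'`) is an upper solution of `(Φ(a(t,x)x'))' = f(t,x,x')`. -/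
def IsUpperSol (T : ℝ) (Φ : ℝ → ℝ) (a : ℝ → ℝ → ℝ) (f : ℝ → ℝ → ℝ → ℝ)
    (β β' : ℝ → ℝ) : Prop :=
  IntegrableOn β' (Icc 0 T) ∧
  (∀ t ∈ Icc (0:ℝ) T, β t = β 0 + ∫ s in (0:ℝ)..t, β' s) ∧
  ∃ z : ℝ → ℝ, IntegrableOn z (Icc 0 T) ∧
    (∃ c : ℝ, ∀ᵐ t ∂(volume.restrict (Icc (0:ℝ) T)),
      Φ (a t (β t) * β' t) = c + ∫ s in (0:ℝ)..t, z s) ∧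
    (∀ᵐ t ∂(volume.restrict (Icc (0:ℝ) T)), z t ≤ f t (β t) (β' t))

/-! Suppose `𝒜_β(0) < 𝒜_α(0)`. Since `α(0) = β(0)`, the coefficients `a(t, α(t))` and `a(t, β(t))`
share the positive value `a(0, α(0))` at `t = 0`, so by continuity `α' > β'` a.e. on some `(0, δ]`.
Integrating gives `α(δ) - α(0) > β(δ) - β(0)`, which contradicts `α ≤ β` and `α(0) = β(0)`. -/

lemma continuousOn_Icc_of_eq_add_integral {x x' : ℝ → ℝ} {a b : ℝ} (hab : a ≤ b)
    (hx' : IntegrableOn x' (Icc a b)) (hx : ∀ t ∈ Icc a b, x t = x a + ∫ s in a..t, x' s) :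
    ContinuousOn x (Icc a b) := by
  have hprim := intervalIntegral.continuousOn_primitive_interval (μ := volume)
    (by rwa [uIcc_of_le hab] : IntegrableOn x' (uIcc a b))
  rw [uIcc_of_le hab] at hprim
  exact (continuousOn_const.add hprim).congr hx

lemma exists_ae_restrict_Ioc_of_eventually_nhdsWithin_Icc {P Q : ℝ → Prop} {a b : ℝ}
    (hab : a < b) (hP : ∀ᶠ t in 𝓝[Icc a b] a, P t)
    (hQ : ∀ᵐ t ∂volume.restrict (Icc a b), Q t) :
    ∃ c ∈ Ioc a b, ∀ᵐ t ∂volume.restrict (Ioc a c), P t ∧ Q t := by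
  rw [nhdsWithin_Icc_eq_nhdsGE hab] at hP
  obtain ⟨u, hau, hPu⟩ := mem_nhdsGE_iff_exists_Icc_subset.1 hP
  have hsub : Ioc a (min u b) ⊆ Icc a b :=
    Ioc_subset_Icc_self.trans (Icc_subset_Icc_right (min_le_right u b))
  refine ⟨min u b, ⟨lt_min hau hab, min_le_right u b⟩, ?_⟩
  filter_upwards [ae_restrict_of_ae_restrict_of_subset hsub hQ,
    ae_restrict_mem measurableSet_Ioc] with t hQt ht
  exact ⟨hPu ⟨ht.1.le, ht.2.trans (min_le_left u b)⟩, hQt⟩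

lemma intervalIntegral_lt_of_ae_lt {f g : ℝ → ℝ} {a b : ℝ} (hab : a < b)
    (hf : IntervalIntegrable f volume a b) (hg : IntervalIntegrable g volume a b)
    (hlt : ∀ᵐ t ∂volume.restrict (Ioc a b), f t < g t) :
    ∫ t in a..b, f t < ∫ t in a..b, g t := by
  refine intervalIntegral.integral_lt_integral_of_ae_le_of_measure_setOfPred_lt_ne_zero hab.le
    hf hg (hlt.mono fun _ => le_of_lt) ?_
  have hfull : {t | f t < g t} =ᵐ[volume.restrict (Ioc a b)] (univ : Set ℝ) :=
    ae_eq_univ.2 (ae_iff.1 hlt)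
  rw [measure_congr hfull, Measure.restrict_apply_univ, Real.volume_Ioc]
  simpa using hab

lemma exists_Ioc_ae_lt_of_lt_of_ae_eq_mul {u v A B x' y' : ℝ → ℝ} {a b : ℝ} (hab : a < b)
    (hu : ContinuousWithinAt u (Icc a b) a) (hv : ContinuousWithinAt v (Icc a b) a)
    (hA : ContinuousWithinAt A (Icc a b) a) (hB : ContinuousWithinAt B (Icc a b) a)
    (hv0 : 0 < v a) (huv : u a = v a) (hBA : B a < A a)
    (hAeq : ∀ᵐ t ∂volume.restrict (Icc a b), A t = u t * x' t)
    (hBeq : ∀ᵐ t ∂volume.restrict (Icc a b), B t = v t * y' t) :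
    ∃ c ∈ Ioc a b, ∀ᵐ t ∂volume.restrict (Ioc a c), y' t < x' t := by
  have hnear : ∀ᶠ t in 𝓝[Icc a b] a, 0 < u t ∧ 0 < v t ∧ B t * u t < A t * v t :=
    (tendsto_const_nhds.eventually_lt hu (huv ▸ hv0)).and <|
      (tendsto_const_nhds.eventually_lt hv hv0).and <|
      (hB.mul hu).eventually_lt (hA.mul hv)
        (show B a * u a < A a * v a by rw [huv]; exact mul_lt_mul_of_pos_right hBA hv0)
  obtain ⟨c, hc, hae⟩ := exists_ae_restrict_Ioc_of_eventually_nhdsWithin_Icc hab hnear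
    (hAeq.and hBeq)
  refine ⟨c, hc, ?_⟩
  filter_upwards [hae] with t ⟨⟨hut, hvt, hlt⟩, hAt, hBt⟩
  rw [hAt, hBt] at hlt
  nlinarith [mul_pos hut hvt]

theorem stmt8_general
    (T : ℝ) (hT : 0 < T)
    (Φ : ℝ ≃ₜ ℝ)
    (a : ℝ → ℝ → ℝ) (ha : Continuous fun q : ℝ × ℝ => a q.1 q.2)
    (h : ℝ → ℝ) (hhnn : ∀ t ∈ Icc (0:ℝ) T, 0 ≤ h t)
    (hah : ∀ t ∈ Icc (0:ℝ) T, ∀ s : ℝ, h t ≤ a t s)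
    (f : ℝ → ℝ → ℝ → ℝ)
    (α α' β β' : ℝ → ℝ)
    (hlow : IsLowerSol T (⇑Φ) a f α α') (hupp : IsUpperSol T (⇑Φ) a f β β')
    (hαβ : ∀ t ∈ Icc (0:ℝ) T, α t ≤ β t)
    (ha0 : ∀ s : ℝ, a 0 s ≠ 0)
    (Aα Aβ : ℝ → ℝ)
    (hAαc : ContinuousOn Aα (Icc 0 T)) (hAβc : ContinuousOn Aβ (Icc 0 T))
    (hAαeq : ∀ᵐ t ∂(volume.restrict (Icc (0:ℝ) T)), Aα t = a t (α t) * α' t)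
    (hAβeq : ∀ᵐ t ∂(volume.restrict (Icc (0:ℝ) T)), Aβ t = a t (β t) * β' t)
    (h0 : α 0 = β 0) :
    Aα 0 ≤ Aβ 0 := by
  obtain ⟨hα'int, hαrep, -⟩ := hlow
  obtain ⟨hβ'int, hβrep, -⟩ := hupp
  have h0mem : (0:ℝ) ∈ Icc 0 T := ⟨le_rfl, hT.le⟩
  have hcoeff : ∀ {x x' : ℝ → ℝ}, IntegrableOn x' (Icc 0 T) →
      (∀ t ∈ Icc 0 T, x t = x 0 + ∫ s in (0:ℝ)..t, x' s) →
      ContinuousWithinAt (fun t => a t (x t)) (Icc 0 T) 0 := fun hx' hx =>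
    ha.comp_continuousOn (continuousOn_id.prodMk
      (continuousOn_Icc_of_eq_add_integral hT.le hx' hx)) 0 h0mem
  have hcoeff0 : 0 < a 0 (β 0) :=
    ((hhnn 0 h0mem).trans (hah 0 h0mem _)).lt_of_ne (ha0 _).symm
  by_contra! hlt
  obtain ⟨δ, ⟨hδ, hδT⟩, hderiv⟩ := exists_Ioc_ae_lt_of_lt_of_ae_eq_mul hT
    (hcoeff hα'int hαrep) (hcoeff hβ'int hβrep) (hAαc 0 h0mem) (hAβc 0 h0mem) hcoeff0
    (by rw [h0]) hlt hAαeq hAβeq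
  have hint : ∀ {x' : ℝ → ℝ}, IntegrableOn x' (Icc 0 T) → IntervalIntegrable x' volume 0 δ :=
    fun hx' =>
      (hx'.mono_set (uIcc_of_le hδ.le ▸ Icc_subset_Icc_right hδT)).intervalIntegrable
  have hδmem : δ ∈ Icc 0 T := ⟨hδ.le, hδT⟩
  have hcmp := hαβ δ hδmem
  rw [hαrep δ hδmem, hβrep δ hδmem, h0] at hcmp
  linarith [intervalIntegral_lt_of_ae_lt hδ (hint hβ'int) (hint hα'int) hderiv]

/-- If the lower and upper solutions `α ≤ β` agree at `0` and `a(0,·) ≠ 0`, then `𝒜_α(0) ≤ 𝒜_β(0)`. -/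
theorem stmt8
    (T p : ℝ) (hT : 0 < T) (hp : 1 < p)
    (Φ : ℝ ≃ₜ ℝ) (hΦ : StrictMono ⇑Φ)
    (a : ℝ → ℝ → ℝ) (ha : Continuous fun q : ℝ × ℝ => a q.1 q.2)
    (h : ℝ → ℝ) (hhc : ContinuousOn h (Icc 0 T)) (hhnn : ∀ t ∈ Icc (0:ℝ) T, 0 ≤ h t)
    (hhp : MemLp (fun t => (h t)⁻¹) (ENNReal.ofReal p) (volume.restrict (Icc (0:ℝ) T)))
    (hah : ∀ t ∈ Icc (0:ℝ) T, ∀ s : ℝ, h t ≤ a t s)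
    (f : ℝ → ℝ → ℝ → ℝ)
    (hfmeas : ∀ u v : ℝ, Measurable fun t => f t u v)
    (hfcont : ∀ᵐ t ∂(volume.restrict (Icc (0:ℝ) T)), Continuous fun q : ℝ × ℝ => f t q.1 q.2)
    (α α' β β' : ℝ → ℝ)
    (hαW : MemW1p T p α α') (hβW : MemW1p T p β β')
    (hlow : IsLowerSol T (⇑Φ) a f α α') (hupp : IsUpperSol T (⇑Φ) a f β β')
    (hαβ : ∀ t ∈ Icc (0:ℝ) T, α t ≤ β t)
    (ha0 : ∀ s : ℝ, a 0 s ≠ 0)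
    (Aα Aβ : ℝ → ℝ)
    (hAαc : ContinuousOn Aα (Icc 0 T)) (hAβc : ContinuousOn Aβ (Icc 0 T))
    (hAαeq : ∀ᵐ t ∂(volume.restrict (Icc (0:ℝ) T)), Aα t = a t (α t) * α' t)
    (hAβeq : ∀ᵐ t ∂(volume.restrict (Icc (0:ℝ) T)), Aβ t = a t (β t) * β' t)
    (h0 : α 0 = β 0) :
    Aα 0 ≤ Aβ 0 :=
  stmt8_general T hT Φ a ha h hhnn hah f α α' β β' hlow hupp hαβ ha0 Aα Aβ hAαc hAβc hAαeq hAβeq h0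
end
end

section
/- Let $\alpha,\beta\in W^{1,p}(I)$ be a lower and an upper solution of $(\Phi(a(t,x)x'))'=f(t,x,x')$ with $\alpha\le\beta$ on $I$, and suppose $a(T,x)\neq 0$ for all $x\in\mathbb{R}$. If $\alpha(T)=\beta(T)$, then $\mathcal{A}_\alpha(T)\ge\mathcal{A}_\beta(T)$. -/
/-! If `𝒜_β(T) > 𝒜_α(T)`, then, as `a(T, α(T)) = a(T, β(T)) > 0`, the continuous function
`𝒜_β / a(·, β) - 𝒜_α / a(·, α)`, which equals `β' - α'` a.e. near `T`, is bounded below by a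
positive constant on some `[t₀, T]`. Integrating, `(β - α)(T) > (β - α)(t₀) ≥ 0`, which contradicts
`α(T) = β(T)`. -/

open MeasureTheory Set Filter Topology

noncomputable section

open intervalIntegral

theorem exists_Icc_forall_of_eventually_nhdsWithin_Icc {α : Type*} [LinearOrder α]
    [TopologicalSpace α] [OrderTopology α] [NoMinOrder α] [DenselyOrdered α] {a b : α}
    (hab : a < b) {p : α → Prop} (hp : ∀ᶠ t in 𝓝[Icc a b] b, p t) :
    ∃ t₀ ∈ Ico a b, ∀ t ∈ Icc t₀ b, p t := by
  rw [nhdsWithin_Icc_eq_nhdsLE hab] at hp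
  obtain ⟨l, hlb, hl⟩ := mem_nhdsLE_iff_exists_Icc_subset.1 hp
  exact ⟨max l a, ⟨le_max_right _ _, max_lt hlb hab⟩,
    fun t ht => hl ⟨(le_max_left _ _).trans ht.1, ht.2⟩⟩

/-- `x` is absolutely continuous on `[a, b]` with a.e. derivative `x'`. -/
def IsIndefiniteIntegralOn (x x' : ℝ → ℝ) (a b : ℝ) : Prop :=
  IntegrableOn x' (Icc a b) ∧ ∀ t ∈ Icc a b, x t = x a + ∫ s in a..t, x' s

namespace IsIndefiniteIntegralOn

variable {x x' y y' : ℝ → ℝ} {a b s t δ : ℝ}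

theorem intervalIntegrable (hx : IsIndefiniteIntegralOn x x' a b) (hs : s ∈ Icc a b)
    (ht : t ∈ Icc a b) : IntervalIntegrable x' volume s t :=
  (hx.1.mono_set (uIcc_subset_Icc hs ht)).intervalIntegrable

theorem continuousOn (hx : IsIndefiniteIntegralOn x x' a b) : ContinuousOn x (Icc a b) := by
  refine ((continuousOn_const (c := x a)).add (continuousOn_primitive_Icc hx.1)).congr
    fun t ht => ?_
  rw [hx.2 t ht, integral_of_le ht.1, Pi.add_apply, integral_Icc_eq_integral_Ioc]

theorem integral_eq_sub (hx : IsIndefiniteIntegralOn x x' a b) (hs : s ∈ Icc a b)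
    (ht : t ∈ Icc a b) : ∫ u in s..t, x' u = x t - x s := by
  have ha : a ∈ Icc a b := left_mem_Icc.2 (hs.1.trans hs.2)
  rw [← integral_interval_sub_left (hx.intervalIntegrable ha ht) (hx.intervalIntegrable ha hs),
    hx.2 t ht, hx.2 s hs]
  ring

theorem sub (hy : IsIndefiniteIntegralOn y y' a b) (hx : IsIndefiniteIntegralOn x x' a b) :
    IsIndefiniteIntegralOn (fun t => y t - x t) (fun t => y' t - x' t) a b := by
  refine ⟨hy.1.sub hx.1, fun t ht => ?_⟩
  have ha : a ∈ Icc a b := left_mem_Icc.2 (ht.1.trans ht.2)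
  beta_reduce
  rw [integral_sub (hy.intervalIntegrable ha ht) (hx.intervalIntegrable ha ht), hy.2 t ht,
    hx.2 t ht]
  ring

theorem mul_sub_le_sub (hx : IsIndefiniteIntegralOn x x' a b) (hs : s ∈ Icc a b)
    (ht : t ∈ Icc a b) (hst : s ≤ t) (hδ : ∀ᵐ u ∂volume.restrict (Icc s t), δ ≤ x' u) :
    δ * (t - s) ≤ x t - x s :=
  calc δ * (t - s) = ∫ _ in s..t, δ := by simp [mul_comm]
    _ ≤ ∫ u in s..t, x' u :=
      integral_mono_ae_restrict hst intervalIntegrable_const (hx.intervalIntegrable hs ht) hδ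
    _ = x t - x s := hx.integral_eq_sub hs ht

theorem nonpos_of_le_of_eq_right (hx : IsIndefiniteIntegralOn x x' a b)
    (hy : IsIndefiniteIntegralOn y y' a b) (hle : ∀ t ∈ Icc a b, x t ≤ y t) (hb : x b = y b)
    (hs : s ∈ Ico a b) (hδ : ∀ᵐ u ∂volume.restrict (Icc s b), δ ≤ y' u - x' u) : δ ≤ 0 := by
  have hsb : s ∈ Icc a b := Ico_subset_Icc_self hs
  have hgrowth := (hy.sub hx).mul_sub_le_sub hsb (right_mem_Icc.2 (hsb.1.trans hsb.2)) hs.2.le hδ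
  refine nonpos_of_mul_nonpos_left ?_ (sub_pos.2 hs.2)
  linarith [hle s hsb]

end IsIndefiniteIntegralOn

theorem stmt9_general
    (T : ℝ) (hT : 0 < T)
    (Φ : ℝ ≃ₜ ℝ)
    (a : ℝ → ℝ → ℝ) (ha : Continuous fun q : ℝ × ℝ => a q.1 q.2)
    (h : ℝ → ℝ) (hhnn : ∀ t ∈ Icc (0:ℝ) T, 0 ≤ h t)
    (hah : ∀ t ∈ Icc (0:ℝ) T, ∀ s : ℝ, h t ≤ a t s)
    (f : ℝ → ℝ → ℝ → ℝ)
    (α α' β β' : ℝ → ℝ)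
    (hlow : IsLowerSol T (⇑Φ) a f α α') (hupp : IsUpperSol T (⇑Φ) a f β β')
    (hαβ : ∀ t ∈ Icc (0:ℝ) T, α t ≤ β t)
    (haT : ∀ s : ℝ, a T s ≠ 0)
    (Aα Aβ : ℝ → ℝ)
    (hAαc : ContinuousOn Aα (Icc 0 T)) (hAβc : ContinuousOn Aβ (Icc 0 T))
    (hAαeq : ∀ᵐ t ∂(volume.restrict (Icc (0:ℝ) T)), Aα t = a t (α t) * α' t)
    (hAβeq : ∀ᵐ t ∂(volume.restrict (Icc (0:ℝ) T)), Aβ t = a t (β t) * β' t)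
    (hT0 : α T = β T) :
    Aβ T ≤ Aα T := by
  by_contra! hlt
  have hTmem : T ∈ Icc (0:ℝ) T := right_mem_Icc.2 hT.le
  have hα : IsIndefiniteIntegralOn α α' 0 T := ⟨hlow.1, hlow.2.1⟩
  have hβ : IsIndefiniteIntegralOn β β' 0 T := ⟨hupp.1, hupp.2.1⟩
  have haα : ContinuousOn (fun t => a t (α t)) (Icc 0 T) :=
    ha.comp_continuousOn (continuousOn_id.prodMk hα.continuousOn)
  have haβ : ContinuousOn (fun t => a t (β t)) (Icc 0 T) :=
    ha.comp_continuousOn (continuousOn_id.prodMk hβ.continuousOn)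
  have hA : 0 < a T (α T) := ((hhnn T hTmem).trans (hah T hTmem _)).lt_of_ne (haT _).symm
  have hA' : a T (β T) ≠ 0 := hT0 ▸ hA.ne'
  set D := fun t => Aβ t / a t (β t) - Aα t / a t (α t) with hDdef
  have hDT : 0 < D T := by
    simp only [hDdef, ← hT0, div_sub_div_same]
    exact div_pos (sub_pos.2 hlt) hA
  have hD : ContinuousWithinAt D (Icc 0 T) T :=
    ((hAβc T hTmem).div (haβ T hTmem) hA').sub ((hAαc T hTmem).div (haα T hTmem) hA.ne')
  obtain ⟨t₀, ht₀, hnear⟩ := exists_Icc_forall_of_eventually_nhdsWithin_Icc hT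
    ((hD.eventually_const_lt (half_lt_self hDT)).and
      (((haα T hTmem).eventually_ne hA.ne').and ((haβ T hTmem).eventually_ne hA')))
  have hderiv : ∀ᵐ t ∂volume.restrict (Icc t₀ T), D T / 2 ≤ β' t - α' t := by
    have hsub : Icc t₀ T ⊆ Icc 0 T := Icc_subset_Icc_left ht₀.1
    filter_upwards [ae_restrict_of_ae_restrict_of_subset hsub hAαeq,
      ae_restrict_of_ae_restrict_of_subset hsub hAβeq, ae_restrict_mem measurableSet_Icc]
      with t hαt hβt ht
    obtain ⟨hDt, hαne, hβne⟩ := hnear t ht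
    simp only [hDdef, hαt, hβt, mul_div_cancel_left₀ _ hαne, mul_div_cancel_left₀ _ hβne] at hDt
    exact hDt.le
  exact (half_pos hDT).not_ge (hα.nonpos_of_le_of_eq_right hβ hαβ hT0 ht₀ hderiv)

/-- If the lower and upper solutions `α ≤ β` agree at `T` and `a(T,·) ≠ 0`, then `𝒜_α(T) ≥ 𝒜_β(T)`. -/
theorem stmt9
    (T p : ℝ) (hT : 0 < T) (hp : 1 < p)
    (Φ : ℝ ≃ₜ ℝ) (hΦ : StrictMono ⇑Φ)
    (a : ℝ → ℝ → ℝ) (ha : Continuous fun q : ℝ × ℝ => a q.1 q.2)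
    (h : ℝ → ℝ) (hhc : ContinuousOn h (Icc 0 T)) (hhnn : ∀ t ∈ Icc (0:ℝ) T, 0 ≤ h t)
    (hhp : MemLp (fun t => (h t)⁻¹) (ENNReal.ofReal p) (volume.restrict (Icc (0:ℝ) T)))
    (hah : ∀ t ∈ Icc (0:ℝ) T, ∀ s : ℝ, h t ≤ a t s)
    (f : ℝ → ℝ → ℝ → ℝ)
    (hfmeas : ∀ u v : ℝ, Measurable fun t => f t u v)
    (hfcont : ∀ᵐ t ∂(volume.restrict (Icc (0:ℝ) T)), Continuous fun q : ℝ × ℝ => f t q.1 q.2)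
    (α α' β β' : ℝ → ℝ)
    (hαW : MemW1p T p α α') (hβW : MemW1p T p β β')
    (hlow : IsLowerSol T (⇑Φ) a f α α') (hupp : IsUpperSol T (⇑Φ) a f β β')
    (hαβ : ∀ t ∈ Icc (0:ℝ) T, α t ≤ β t)
    (haT : ∀ s : ℝ, a T s ≠ 0)
    (Aα Aβ : ℝ → ℝ)
    (hAαc : ContinuousOn Aα (Icc 0 T)) (hAβc : ContinuousOn Aβ (Icc 0 T))
    (hAαeq : ∀ᵐ t ∂(volume.restrict (Icc (0:ℝ) T)), Aα t = a t (α t) * α' t)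
    (hAβeq : ∀ᵐ t ∂(volume.restrict (Icc (0:ℝ) T)), Aβ t = a t (β t) * β' t)
    (hT0 : α T = β T) :
    Aβ T ≤ Aα T :=
  stmt9_general T hT Φ a ha h hhnn hah f α α' β β' hlow hupp hαβ haT Aα Aβ hAαc hAβc hAαeq hAβeq hT0
end
end
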